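/- arXiv:1910.01239 — 3 statements merged into one kernel-verified Lean document; each statement's English description precedes it below -/
import Mathlib

section
/- Let L be a number field that is a quadratic extension of a totally real number field K, with L totally imaginary (L is a CM field). Let N be such that the group of roots of unity in L has order 2N. Then for every unit u of the ring of integers of L, the power u^{2N} lies in the ring of integers of K. -/
/-!
Under every complex embedding of `L`, complex conjugation induces the same automorphism `σ`: the
nontrivial automorphism of `L/K`. Hence for a unit `u` the unit `u / σ u` has absolute value `1`
at every infinite place, so by Kronecker's theorem it is a root of unity, and its `2N`-th power
is `1`. Thus `u ^ (2N)` is a unit fixed by `σ`, i.e. a unit of `K`.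
-/

open NumberField NumberField.InfinitePlace NumberField.Units

namespace NumberField

section

variable {K : Type*} [Field K]

theorem ComplexEmbedding.isReal_iff_forall_im_eq_zero {φ : K →+* ℂ} :
    ComplexEmbedding.IsReal φ ↔ ∀ x, (φ x).im = 0 := by
  simp only [ComplexEmbedding.isReal_iff, RingHom.ext_iff, ComplexEmbedding.conjugate_coe_eq,
    Complex.conj_eq_iff_im]

theorem isTotallyReal_of_forall_im_eq_zero (h : ∀ φ : K →+* ℂ, ∀ x, (φ x).im = 0) :
    IsTotallyReal K where
  isReal v := by
    rw [← mk_embedding v, isReal_mk_iff, ComplexEmbedding.isReal_iff_forall_im_eq_zero]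
    exact h _

theorem isTotallyComplex_of_forall_exists_im_ne_zero
    (h : ∀ φ : K →+* ℂ, ∃ x, (φ x).im ≠ 0) :
    IsTotallyComplex K where
  isComplex v := by
    rw [← mk_embedding v, isComplex_mk_iff, ComplexEmbedding.isReal_iff_forall_im_eq_zero]
    push Not
    exact h _

end

theorem Units.torsionOrder_eq_card_isOfFinOrder (K : Type*) [Field K] [NumberField K] :
    torsionOrder K = Nat.card {x : K // IsOfFinOrder x} := by
  let ι : (𝓞 K)ˣ →* K := (algebraMap (𝓞 K) K).toMonoidHom.comp (Units.coeHom _)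
  have hι : Function.Injective ι := Units.coe_injective K
  refine Nat.card_eq_of_bijective (fun ζ ↦ ⟨ι ζ, ι.isOfFinOrder ζ.2⟩)
    ⟨?_, fun ⟨x, hx⟩ ↦ ?_⟩
  · intro ζ η h
    simp only [Subtype.mk.injEq] at h
    exact Subtype.ext (hι h)
  have hint : IsIntegral ℤ x := (IsPrimitiveRoot.orderOf x).isIntegral hx.orderOf_pos
  have hy : IsOfFinOrder (⟨x, hint⟩ : 𝓞 K) :=
    (RingOfIntegers.coe_injective.isOfFinOrder_iff (f := (algebraMap (𝓞 K) K).toMonoidHom)).mp hx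
  exact ⟨⟨hy.isUnit.unit, Units.isOfFinOrder_val.mp hy⟩, rfl⟩

namespace IsCMField

theorem pow_torsionOrder_mem_realUnits (K : Type*) [Field K] [CharZero K] [IsCMField K]
    [NumberField K] (u : (𝓞 K)ˣ) : u ^ torsionOrder K ∈ realUnits K := by
  rw [← unitsMulComplexConjInv_ker, MonoidHom.mem_ker, map_pow]
  exact pow_card_eq_one'

theorem exists_isIntegral_algebraMap_eq_of_mem_realUnits (F K : Type*) [Field F]
    [IsTotallyReal F] [Field K] [CharZero K] [Algebra.IsIntegral ℚ K] [IsTotallyComplex K]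
    [Algebra F K] [Algebra.IsQuadraticExtension F K] {u : (𝓞 K)ˣ} (hu : u ∈ realUnits K) :
    ∃ x : F, IsIntegral ℤ x ∧ algebraMap F K x = u := by
  obtain ⟨v, hv⟩ := (mem_realUnits_iff K u).mp hu
  let e := CMExtension.equivMaximalRealSubfield F K
  refine ⟨e.symm (v : 𝓞 (maximalRealSubfield K)), ?_, ?_⟩
  · exact (RingOfIntegers.isIntegral_coe _).map e.symm.toRingHom.toIntAlgHom
  · rw [CMExtension.algebraMap_equivMaximalRealSubfield_symm_apply, ← hv]
    rfl

end IsCMField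

end NumberField

theorem cm_unit_power_totally_real_general (K L : Type*) [Field K] [Field L]
    [NumberField L] [Algebra K L]
    (hquad : Module.finrank K L = 2)
    (hKtr : ∀ φ : K →+* ℂ, ∀ x : K, (φ x).im = 0)
    (hLti : ∀ φ : L →+* ℂ, ∃ x : L, (φ x).im ≠ 0)
    (N : ℕ)
    (hN : Nat.card {x : L // ∃ k : ℕ, 0 < k ∧ x ^ k = 1} = 2 * N) :
    ∀ u : (𝓞 L)ˣ, ∃ x : K, IsIntegral ℤ x ∧
      algebraMap K L x = ((u : 𝓞 L) : L) ^ (2 * N) := by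
  intro u
  have := isTotallyReal_of_forall_im_eq_zero hKtr
  have := isTotallyComplex_of_forall_exists_im_ne_zero hLti
  have : Algebra.IsQuadraticExtension K L := ⟨hquad⟩
  have := IsCMField.ofCMExtension K L
  have htorsion : torsionOrder L = 2 * N := by
    simpa only [Units.torsionOrder_eq_card_isOfFinOrder, isOfFinOrder_iff_pow_eq_one] using hN
  obtain ⟨x, hx, hxu⟩ := IsCMField.exists_isIntegral_algebraMap_eq_of_mem_realUnits K L
    (IsCMField.pow_torsionOrder_mem_realUnits L u)
  exact ⟨x, hx, by rw [hxu, htorsion, Units.coe_pow]⟩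

/-- For a CM field `L` (a totally imaginary quadratic extension of a totally real
number field `K`) with exactly `2N` roots of unity, the `2N`-th power of every unit
of `𝓞 L` lies in `𝓞 K`. -/
theorem cm_unit_power_totally_real (K L : Type*) [Field K] [Field L]
    [NumberField K] [NumberField L] [Algebra K L]
    (hquad : Module.finrank K L = 2)
    (hKtr : ∀ φ : K →+* ℂ, ∀ x : K, (φ x).im = 0)
    (hLti : ∀ φ : L →+* ℂ, ∃ x : L, (φ x).im ≠ 0)
    (N : ℕ)
    (hN : Nat.card {x : L // ∃ k : ℕ, 0 < k ∧ x ^ k = 1} = 2 * N) :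
    ∀ u : (𝓞 L)ˣ, ∃ x : K, IsIntegral ℤ x ∧
      algebraMap K L x = ((u : 𝓞 L) : L) ^ (2 * N) :=
  cm_unit_power_totally_real_general K L hquad hKtr hLti N hN
end

section
/- Let f(x) = x³ − a x² − (a+3)x − 1 with a an integer, a ≥ −1. Then f has three distinct real roots, i.e., every complex root of f is real. -/
/-!
The Möbius map `σ x = -1/(x + 1)`, of order three, permutes the roots of Shanks's cubic `f`,
since `f (σ x) = -f x / (x + 1)³`. As `f (-1) = 1` and `f 0 = -1`, there is a root `y` in
`(-1, 0)`; then `σ y < -1` and `σ (σ y) > 0` are two further roots, so these are all three roots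
of `f`, and every complex root is one of them.
-/

theorem cubic_eq_mul_of_roots {R : Type*} [CommRing R] [NoZeroDivisors R] {b c d x y z : R}
    (hxy : x ≠ y) (hxz : x ≠ z) (hyz : y ≠ z) (hx : x ^ 3 + b * x ^ 2 + c * x + d = 0)
    (hy : y ^ 3 + b * y ^ 2 + c * y + d = 0) (hz : z ^ 3 + b * z ^ 2 + c * z + d = 0) (w : R) :
    w ^ 3 + b * w ^ 2 + c * w + d = (w - x) * (w - y) * (w - z) := by
  have hxy' : x ^ 2 + x * y + y ^ 2 + b * (x + y) + c = 0 :=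
    (mul_eq_zero.1 (by linear_combination hx - hy :
      (x - y) * (x ^ 2 + x * y + y ^ 2 + b * (x + y) + c) = 0)).resolve_left (sub_ne_zero.2 hxy)
  have hxz' : x ^ 2 + x * z + z ^ 2 + b * (x + z) + c = 0 :=
    (mul_eq_zero.1 (by linear_combination hx - hz :
      (x - z) * (x ^ 2 + x * z + z ^ 2 + b * (x + z) + c) = 0)).resolve_left (sub_ne_zero.2 hxz)
  have hsum : x + y + z + b = 0 :=
    (mul_eq_zero.1 (by linear_combination hxy' - hxz' :
      (y - z) * (x + y + z + b) = 0)).resolve_left (sub_ne_zero.2 hyz)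
  -- Newton interpolation: `hx`, `hxy'`, `hsum` are the divided differences `f[x]`, `f[x, y]`,
  -- `f[x, y, z]` of the cubic `f`.
  linear_combination hx + (w - x) * hxy' + (w - x) * (w - y) * hsum

def shanksCubic {R : Type*} [CommRing R] (a x : R) : R :=
  x ^ 3 - a * x ^ 2 - (a + 3) * x - 1

section shanksCubic

variable {R : Type*} [CommRing R]

theorem map_shanksCubic {S : Type*} [CommRing S] (φ : R →+* S) (a x : R) :
    φ (shanksCubic a x) = shanksCubic (φ a) (φ x) := by
  simp only [shanksCubic, map_sub, map_mul, map_pow, map_add, map_ofNat, map_one]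

theorem shanksCubic_eq_mul_of_roots [NoZeroDivisors R] {a x y z : R}
    (hxy : x ≠ y) (hxz : x ≠ z) (hyz : y ≠ z) (hx : shanksCubic a x = 0)
    (hy : shanksCubic a y = 0) (hz : shanksCubic a z = 0) (w : R) :
    shanksCubic a w = (w - x) * (w - y) * (w - z) := by
  unfold shanksCubic at *
  linear_combination cubic_eq_mul_of_roots (b := -a) (c := -(a + 3)) (d := -1) hxy hxz hyz
    (by linear_combination hx) (by linear_combination hy) (by linear_combination hz) w

theorem shanksCubic_zero (a : R) : shanksCubic a 0 = -1 := by
  unfold shanksCubic; ring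

theorem shanksCubic_neg_one (a : R) : shanksCubic a (-1) = 1 := by
  unfold shanksCubic; ring

theorem add_one_ne_zero_of_shanksCubic_eq_zero [Nontrivial R] {a x : R}
    (hx : shanksCubic a x = 0) : x + 1 ≠ 0 := by
  intro h
  rw [eq_neg_of_add_eq_zero_left h, shanksCubic_neg_one] at hx
  exact one_ne_zero hx

end shanksCubic

section Field

variable {K : Type*} [Field K]

theorem shanksCubic_neg_inv_add_one (a x : K) (hx : x + 1 ≠ 0) :
    shanksCubic a (-(x + 1)⁻¹) = -shanksCubic a x / (x + 1) ^ 3 := by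
  unfold shanksCubic
  field_simp
  ring

theorem shanksCubic_neg_inv_add_one_eq_zero {a x : K} (hx : shanksCubic a x = 0) :
    shanksCubic a (-(x + 1)⁻¹) = 0 := by
  rw [shanksCubic_neg_inv_add_one a x (add_one_ne_zero_of_shanksCubic_eq_zero hx), hx,
    neg_zero, zero_div]

end Field

theorem exists_shanksCubic_eq_zero_mem_Ioo (a : ℝ) :
    ∃ y ∈ Set.Ioo (-1 : ℝ) 0, shanksCubic a y = 0 := by
  have hcont : Continuous (shanksCubic a) := by unfold shanksCubic; fun_prop
  have hzero : (0 : ℝ) ∈ Set.Ioo (shanksCubic a 0) (shanksCubic a (-1)) := by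
    rw [shanksCubic_zero, shanksCubic_neg_one]; norm_num
  exact intermediate_value_Ioo' (by norm_num) hcont.continuousOn hzero

theorem shanks_cubic_real_roots_general (a : ℤ) :
    (∃ x y z : ℝ, x ≠ y ∧ x ≠ z ∧ y ≠ z ∧
      x ^ 3 - a * x ^ 2 - (a + 3) * x - 1 = 0 ∧
      y ^ 3 - a * y ^ 2 - (a + 3) * y - 1 = 0 ∧
      z ^ 3 - a * z ^ 2 - (a + 3) * z - 1 = 0) ∧
    (∀ w : ℂ, w ^ 3 - a * w ^ 2 - (a + 3) * w - 1 = 0 → w.im = 0) := by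
  obtain ⟨y, ⟨hy₁, hy₂⟩, hy⟩ := exists_shanksCubic_eq_zero_mem_Ioo (a : ℝ)
  set x := -(y + 1)⁻¹
  set z := -(x + 1)⁻¹
  have hx : shanksCubic (a : ℝ) x = 0 := shanksCubic_neg_inv_add_one_eq_zero hy
  have hz : shanksCubic (a : ℝ) z = 0 := shanksCubic_neg_inv_add_one_eq_zero hx
  have hx₁ : x < -1 := neg_lt_neg ((one_lt_inv₀ (by linarith)).2 (by linarith))
  have hz₀ : 0 < z := neg_pos.2 (inv_lt_zero.2 (by linarith))
  have hxy : x ≠ y := by linarith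
  have hxz : x ≠ z := by linarith
  have hyz : y ≠ z := by linarith
  refine ⟨⟨x, y, z, hxy, hxz, hyz, hx, hy, hz⟩, fun w hw => ?_⟩
  have hcast {t : ℝ} (ht : shanksCubic (a : ℝ) t = 0) : shanksCubic (a : ℂ) t = 0 := by
    simpa [map_shanksCubic] using congrArg Complex.ofRealHom ht
  have hprod : (w - x) * (w - y) * (w - z) = 0 :=
    (shanksCubic_eq_mul_of_roots (by exact_mod_cast hxy) (by exact_mod_cast hxz)
      (by exact_mod_cast hyz) (hcast hx) (hcast hy) (hcast hz) w).symm.trans hw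
  simp only [mul_eq_zero, sub_eq_zero] at hprod
  rcases hprod with (rfl | rfl) | rfl <;> exact Complex.ofReal_im _

/-- Shanks's simplest cubic `x³ − a x² − (a+3)x − 1`, for an integer `a ≥ −1`,
has three distinct real roots; in particular every complex root is real. -/
theorem shanks_cubic_real_roots (a : ℤ) (ha : -1 ≤ a) :
    (∃ x y z : ℝ, x ≠ y ∧ x ≠ z ∧ y ≠ z ∧
      x ^ 3 - a * x ^ 2 - (a + 3) * x - 1 = 0 ∧
      y ^ 3 - a * y ^ 2 - (a + 3) * y - 1 = 0 ∧
      z ^ 3 - a * z ^ 2 - (a + 3) * z - 1 = 0) ∧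
    (∀ w : ℂ, w ^ 3 - a * w ^ 2 - (a + 3) * w - 1 = 0 → w.im = 0) :=
  shanks_cubic_real_roots_general a
end

section
/- For every integer t ≥ 4, the quartic polynomial x⁴ − t x³ − 6x² + t x + 1 has four distinct real roots. -/
/-!
Evaluating at `-2, -1, 0, 1, t + 2` gives the signs `+, -, +, -, +`, so the intermediate value
theorem yields four distinct real roots; a quartic has at most four complex roots, so these are
all of them and in particular every complex root is real.
-/

open Polynomial

noncomputable def grasQuartic {R : Type*} [CommRing R] (t : R) : R[X] :=
  X ^ 4 - C t * X ^ 3 - 6 * X ^ 2 + C t * X + 1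

section grasQuartic

variable {R : Type*} [CommRing R]

@[simp]
lemma eval_grasQuartic (t x : R) :
    (grasQuartic t).eval x = x ^ 4 - t * x ^ 3 - 6 * x ^ 2 + t * x + 1 := by
  simp [grasQuartic]

lemma natDegree_grasQuartic [Nontrivial R] (t : R) : (grasQuartic t).natDegree = 4 := by
  unfold grasQuartic
  compute_degree!

lemma map_grasQuartic {S : Type*} [CommRing S] (f : R →+* S) (t : R) :
    (grasQuartic t).map f = grasQuartic (f t) := by
  simp [grasQuartic]

end grasQuartic

namespace Polynomial

lemma mem_of_isRoot_of_natDegree_le_card {R : Type*} [CommRing R] [IsDomain R] {p : R[X]}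
    (hp : p ≠ 0) {s : Finset R} (hs : ∀ x ∈ s, p.IsRoot x) (hcard : p.natDegree ≤ s.card)
    {z : R} (hz : p.IsRoot z) : z ∈ s := by
  classical
  have hsub : s ⊆ p.roots.toFinset := fun x hx => by simpa [hp] using hs x hx
  have hroots : p.roots.toFinset.card ≤ s.card :=
    (Multiset.toFinset_card_le _).trans (p.card_roots'.trans hcard)
  rw [Finset.eq_of_subset_of_card_le hsub hroots]
  simpa [hp] using hz

lemma im_eq_zero_of_isRoot_map_ofReal {p : ℝ[X]} (hp : p ≠ 0) {s : Finset ℝ}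
    (hs : ∀ x ∈ s, p.IsRoot x) (hcard : p.natDegree ≤ s.card) {z : ℂ}
    (hz : (p.map Complex.ofRealHom).IsRoot z) : z.im = 0 := by
  have hp' : p.map Complex.ofRealHom ≠ 0 := map_ne_zero hp
  have hmem : z ∈ s.image ((↑) : ℝ → ℂ) := by
    refine mem_of_isRoot_of_natDegree_le_card hp' ?_ ?_ hz
    · simp only [Finset.mem_image, forall_exists_index, and_imp, forall_apply_eq_imp_iff₂]
      exact fun x hx => (hs x hx).map
    · rwa [natDegree_map, Finset.card_image_of_injective _ Complex.ofReal_injective]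
  obtain ⟨x, -, rfl⟩ := Finset.mem_image.mp hmem
  exact Complex.ofReal_im x

lemma exists_isRoot_mem_Ioo_of_eval_mul_eval_neg {p : ℝ[X]} {a b : ℝ} (hab : a ≤ b)
    (h : p.eval a * p.eval b < 0) : ∃ r ∈ Set.Ioo a b, p.IsRoot r := by
  have hcont : ContinuousOn (fun x => p.eval x) (Set.Icc a b) := p.continuousOn
  rcases mul_neg_iff.mp h with ⟨ha, hb⟩ | ⟨ha, hb⟩
  · exact intermediate_value_Ioo' hab hcont ⟨hb, ha⟩
  · exact intermediate_value_Ioo hab hcont ⟨ha, hb⟩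

end Polynomial

/-- The value of `grasQuartic T` at `-2` is `6 * T - 7`. -/
lemma exists_isRoot_grasQuartic {T : ℝ} (hT : 7 < 6 * T) :
    ∃ r₁ r₂ r₃ r₄ : ℝ, r₁ < r₂ ∧ r₂ < r₃ ∧ r₃ < r₄ ∧ (grasQuartic T).IsRoot r₁ ∧
      (grasQuartic T).IsRoot r₂ ∧ (grasQuartic T).IsRoot r₃ ∧ (grasQuartic T).IsRoot r₄ := by
  have hroot (a b : ℝ) (hab : a ≤ b)
      (h : (grasQuartic T).eval a * (grasQuartic T).eval b < 0) :=
    exists_isRoot_mem_Ioo_of_eval_mul_eval_neg hab h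
  obtain ⟨r₁, ⟨-, h₁⟩, hr₁⟩ := hroot (-2) (-1) (by norm_num) (by norm_num; linarith)
  obtain ⟨r₂, ⟨h₂, h₂'⟩, hr₂⟩ := hroot (-1) 0 (by norm_num) (by norm_num; linarith)
  obtain ⟨r₃, ⟨h₃, h₃'⟩, hr₃⟩ := hroot 0 1 (by norm_num) (by norm_num; linarith)
  obtain ⟨r₄, ⟨h₄, -⟩, hr₄⟩ := hroot 1 (T + 2) (by linarith) (by simp; nlinarith)
  exact ⟨r₁, r₂, r₃, r₄, by linarith, by linarith, by linarith, hr₁, hr₂, hr₃, hr₄⟩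

/-- For every integer `t ≥ 4`, the quartic `x⁴ − t x³ − 6x² + t x + 1` has four
distinct real roots. -/
theorem gras_quartic_real_roots (t : ℤ) (ht : 4 ≤ t) :
    ∃ x₁ x₂ x₃ x₄ : ℝ, x₁ ≠ x₂ ∧ x₁ ≠ x₃ ∧ x₁ ≠ x₄ ∧ x₂ ≠ x₃ ∧ x₂ ≠ x₄ ∧ x₃ ≠ x₄ ∧
      (∀ x ∈ ({x₁, x₂, x₃, x₄} : Set ℝ),
        x ^ 4 - t * x ^ 3 - 6 * x ^ 2 + t * x + 1 = 0) ∧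
      (∀ z : ℂ, z ^ 4 - t * z ^ 3 - 6 * z ^ 2 + t * z + 1 = 0 → z.im = 0) := by
  have hT : 7 < 6 * (t : ℝ) := by norm_cast; omega
  obtain ⟨r₁, r₂, r₃, r₄, lt₁₂, lt₂₃, lt₃₄, hr₁, hr₂, hr₃, hr₄⟩ := exists_isRoot_grasQuartic hT
  obtain ⟨h₁₂, h₁₃, h₁₄, h₂₃, h₂₄, h₃₄⟩ :
      r₁ ≠ r₂ ∧ r₁ ≠ r₃ ∧ r₁ ≠ r₄ ∧ r₂ ≠ r₃ ∧ r₂ ≠ r₄ ∧ r₃ ≠ r₄ :=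
    ⟨lt₁₂.ne, (lt₁₂.trans lt₂₃).ne, (lt₁₂.trans (lt₂₃.trans lt₃₄)).ne, lt₂₃.ne,
      (lt₂₃.trans lt₃₄).ne, lt₃₄.ne⟩
  have hroots : ∀ x ∈ ({r₁, r₂, r₃, r₄} : Finset ℝ), (grasQuartic (t : ℝ)).IsRoot x := by
    simp only [Finset.mem_insert, Finset.mem_singleton]
    rintro x (rfl | rfl | rfl | rfl) <;> assumption
  refine ⟨r₁, r₂, r₃, r₄, h₁₂, h₁₃, h₁₄, h₂₃, h₂₄, h₃₄, fun x hx => ?_, fun z hz => ?_⟩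
  · simpa using hroots x (by simpa using hx)
  · refine im_eq_zero_of_isRoot_map_ofReal ?_ hroots ?_ (by simpa [map_grasQuartic] using hz)
    · exact ne_zero_of_natDegree_gt (n := 0) (by rw [natDegree_grasQuartic]; norm_num)
    · rw [natDegree_grasQuartic,
        Finset.card_eq_four.mpr ⟨_, _, _, _, h₁₂, h₁₃, h₁₄, h₂₃, h₂₄, h₃₄, rfl⟩]
end
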